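/- arXiv:0904.1113 — 3 statements merged into one kernel-verified Lean document; each statement's English description precedes it below -/
import Mathlib

section
/- Let C, A, B be finite sets of points in ℝ^d with A ∩ C = ∅, B ⊆ C, |A| ≠ |B|, and let C' = (C \ B) ∪ A be nonempty. Suppose ‖cm(C) − (|B|·cm(B) − |A|·cm(A))/(|B| − |A|)‖ ≥ √(n·ε), where n ≥ |C'| and ε ≥ 0. Then |C'|·‖cm(C') − cm(C)‖² ≥ ε. -/
/-!
Write `m = |C'|` and `δ = |B| - |A|`, so that `|C| = m + δ` and `Σ C' = Σ C - (Σ B - Σ A)`.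
Then `cm C' - cm C = (δ / m) • (cm C - δ⁻¹ • (Σ B - Σ A))`, hence
`m ‖cm C' - cm C‖² = δ² R² / m` with `R` the distance in the hypothesis. Since `δ` is a
nonzero integer, `δ² ≥ 1`, and `R² ≥ n ε ≥ m ε`.
-/

/-- Center of mass of a finite set of points in Euclidean space. -/
noncomputable def cm {d : ℕ} (S : Finset (EuclideanSpace ℝ (Fin d))) :
    EuclideanSpace ℝ (Fin d) := (S.card : ℝ)⁻¹ • ∑ x ∈ S, x

open Finset

theorem Finset.sum_sdiff_union_of_disjoint {α M : Type*} [DecidableEq α] [AddCommGroup M]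
    {A B C : Finset α} (f : α → M) (hAC : Disjoint A C) (hBC : B ⊆ C) :
    ∑ x ∈ C \ B ∪ A, f x = ∑ x ∈ C, f x - ∑ x ∈ B, f x + ∑ x ∈ A, f x := by
  rw [sum_union (hAC.symm.mono_left sdiff_subset), sum_sdiff_eq_sub hBC]

theorem Finset.card_sdiff_union_of_disjoint {α : Type*} [DecidableEq α] {A B C : Finset α}
    (hAC : Disjoint A C) (hBC : B ⊆ C) :
    ((C \ B ∪ A).card : ℝ) = C.card - B.card + A.card := by
  simpa using sum_sdiff_union_of_disjoint (fun _ => (1 : ℝ)) hAC hBC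

theorem one_le_sq_natCast_sub {a b : ℕ} (h : a ≠ b) : 1 ≤ ((a : ℝ) - b) ^ 2 := by
  rcases h.lt_or_gt with h | h
  · have : (a : ℝ) + 1 ≤ b := by exact_mod_cast h
    nlinarith
  · have : (b : ℝ) + 1 ≤ a := by exact_mod_cast h
    nlinarith

theorem inv_smul_sub_sub_eq_smul {E : Type*} [AddCommGroup E] [Module ℝ E] {m δ : ℝ}
    (hm : m ≠ 0) (hδ : δ ≠ 0) (c t : E) :
    m⁻¹ • ((m + δ) • c - t) - c = (m⁻¹ * δ) • (c - δ⁻¹ • t) := by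
  match_scalars <;> field_simp; ring

section CenterOfMass

variable {d : ℕ}

theorem card_smul_cm (S : Finset (EuclideanSpace ℝ (Fin d))) :
    (S.card : ℝ) • cm S = ∑ x ∈ S, x := by
  rcases S.eq_empty_or_nonempty with rfl | h
  · simp [cm]
  · exact smul_inv_smul₀ (by exact_mod_cast h.card_pos.ne') _

variable [DecidableEq (EuclideanSpace ℝ (Fin d))] {A B C : Finset (EuclideanSpace ℝ (Fin d))}

theorem cm_sdiff_union_sub_cm (hAC : Disjoint A C) (hBC : B ⊆ C) (hne : (C \ B ∪ A).Nonempty)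
    (hAB : A.card ≠ B.card) :
    cm (C \ B ∪ A) - cm C = (((C \ B ∪ A).card : ℝ)⁻¹ * ((B.card : ℝ) - A.card)) •
      (cm C - ((B.card : ℝ) - A.card)⁻¹ • (∑ x ∈ B, x - ∑ x ∈ A, x)) := by
  have hm : ((C \ B ∪ A).card : ℝ) ≠ 0 := by exact_mod_cast hne.card_pos.ne'
  have hδ : (B.card : ℝ) - A.card ≠ 0 := sub_ne_zero.mpr (by exact_mod_cast hAB.symm)
  have hsum : ∑ x ∈ C \ B ∪ A, x =
      ((C \ B ∪ A).card + ((B.card : ℝ) - A.card)) • cm C - (∑ x ∈ B, x - ∑ x ∈ A, x) := by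
    rw [card_sdiff_union_of_disjoint hAC hBC, sum_sdiff_union_of_disjoint (fun x => x) hAC hBC,
      show (C.card : ℝ) - B.card + A.card + (B.card - A.card) = C.card by ring, card_smul_cm]
    abel
  rw [← inv_smul_sub_sub_eq_smul hm hδ, ← hsum, cm]

theorem card_mul_norm_cm_sdiff_union_sub_cm_sq (hAC : Disjoint A C) (hBC : B ⊆ C)
    (hne : (C \ B ∪ A).Nonempty) (hAB : A.card ≠ B.card) :
    ((C \ B ∪ A).card : ℝ) * ‖cm (C \ B ∪ A) - cm C‖ ^ 2 =
      ((B.card : ℝ) - A.card) ^ 2 *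
        ‖cm C - ((B.card : ℝ) - A.card)⁻¹ • (∑ x ∈ B, x - ∑ x ∈ A, x)‖ ^ 2 /
        (C \ B ∪ A).card := by
  have hm : ((C \ B ∪ A).card : ℝ) ≠ 0 := by exact_mod_cast hne.card_pos.ne'
  rw [cm_sdiff_union_sub_cm hAC hBC hne hAB, norm_smul, Real.norm_eq_abs, mul_pow, sq_abs]
  field_simp

end CenterOfMass

theorem stmt_3 (d n : ℕ) [DecidableEq (EuclideanSpace ℝ (Fin d))] (ε : ℝ) (hε : 0 ≤ ε)
    (C A B C' : Finset (EuclideanSpace ℝ (Fin d)))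
    (hAC : A ∩ C = ∅) (hBC : B ⊆ C) (hAB : A.card ≠ B.card)
    (hC' : C' = (C \ B) ∪ A) (hC'ne : C'.Nonempty) (hn : C'.card ≤ n)
    (hfar : Real.sqrt (n * ε) ≤
      ‖cm C - (((B.card : ℝ) - A.card)⁻¹ • (∑ x ∈ B, x - ∑ x ∈ A, x))‖) :
    ε ≤ (C'.card : ℝ) * ‖cm C' - cm C‖ ^ 2 := by
  subst hC'
  set R := ‖cm C - (((B.card : ℝ) - A.card)⁻¹ • (∑ x ∈ B, x - ∑ x ∈ A, x))‖
  have hm : (0 : ℝ) < (C \ B ∪ A).card := by exact_mod_cast hC'ne.card_pos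
  have hR : (n : ℝ) * ε ≤ R ^ 2 := (Real.sqrt_le_iff.mp hfar).2
  have hδ := one_le_sq_natCast_sub hAB.symm
  have hmn : ((C \ B ∪ A).card : ℝ) ≤ n := by exact_mod_cast hn
  rw [card_mul_norm_cm_sdiff_union_sub_cm_sq (disjoint_iff_inter_eq_empty.mpr hAC) hBC hC'ne hAB,
    le_div_iff₀ hm]
  calc ε * (C \ B ∪ A).card ≤ n * ε := by rw [mul_comm]; exact mul_le_mul_of_nonneg_right hmn hε
    _ ≤ R ^ 2 := hR
    _ ≤ ((B.card : ℝ) - A.card) ^ 2 * R ^ 2 := le_mul_of_one_le_left (sq_nonneg R) hδ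
end

section
/- Let p, q, p', q' ∈ ℝ^d with p ≠ q and p' ≠ q'. Let H be the bisecting hyperplane of p and q and H' the bisecting hyperplane of p' and q'. Suppose ‖p − p'‖ ≤ δ and ‖q − q'‖ ≤ δ for some δ ≥ 0. Let θ be the angle between the unit normal vectors y = (q−p)/‖q−p‖ and y' = (q'−p')/‖q'−p'‖. Then for any two points u, v ∈ H, dist(v, H') − dist(u, H') ≤ ‖v − u‖·‖y' − y‖. -/
/-!
The distance from `x` to the hyperplane through `m` with unit normal `n` is `|⟪x - m, n⟫|`,
and the bisector of `a, b` is such a hyperplane, with normal `(b - a) / ‖b - a‖`. Hence the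
difference of the distances from `u, v ∈ H` to `H'` is at most `|⟪v - u, y'⟫|`, and since
`v - u ⟂ y` this equals `|⟪v - u, y' - y⟫| ≤ ‖v - u‖ * ‖y' - y‖`.
-/

open RealInnerProductSpace Metric

variable {E : Type*} [NormedAddCommGroup E] [InnerProductSpace ℝ E]

theorem infDist_setOf_inner_sub_eq_zero {n : E} (hn : ‖n‖ = 1) (m x : E) :
    infDist x {z | ⟪z - m, n⟫ = 0} = |⟪x - m, n⟫| := by
  have hnn : ⟪n, n⟫ = 1 := by rw [real_inner_self_eq_norm_sq, hn, one_pow]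
  refine le_antisymm ?_ ?_
  · set c := ⟪x - m, n⟫
    have hfoot : x - c • n ∈ {z | ⟪z - m, n⟫ = 0} := by
      change ⟪x - c • n - m, n⟫ = 0
      rw [sub_right_comm, inner_sub_left, real_inner_smul_left, hnn, mul_one, sub_self]
    calc infDist x {z | ⟪z - m, n⟫ = 0} ≤ dist x (x - c • n) := infDist_le_dist_of_mem hfoot
      _ = |c| := by rw [dist_eq_norm, sub_sub_cancel, norm_smul, hn, mul_one, Real.norm_eq_abs]
  · refine (le_infDist ⟨m, by simp⟩).2 fun z (hz : ⟪z - m, n⟫ = 0) => ?_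
    calc |⟪x - m, n⟫| = |⟪x - z, n⟫| := by
          rw [← sub_add_sub_cancel x z m, inner_add_left, hz, add_zero]
      _ ≤ ‖x - z‖ * ‖n‖ := abs_real_inner_le_norm _ _
      _ = dist x z := by rw [hn, mul_one, dist_eq_norm]

theorem setOf_norm_sub_eq_norm_sub (a b : E) :
    {x | ‖x - a‖ = ‖x - b‖} = {x | ⟪x - midpoint ℝ a b, ‖b - a‖⁻¹ • (b - a)⟫ = 0} := by
  ext x
  rw [Set.mem_ofPred_eq, ← dist_eq_norm, ← dist_eq_norm,
    ← AffineSubspace.mem_perpBisector_iff_dist_eq,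
    AffineSubspace.mem_perpBisector_iff_inner_eq_zero, Set.mem_ofPred_eq, real_inner_smul_right]
  rcases eq_or_ne a b with rfl | hab
  · simp
  · have : ‖b - a‖⁻¹ ≠ 0 := inv_ne_zero (norm_ne_zero_iff.2 (sub_ne_zero.2 hab.symm))
    simp [this, vsub_eq_sub]

theorem abs_inner_sub_abs_inner_le_of_inner_eq_zero {u v y : E} (h : ⟪v - u, y⟫ = 0)
    (m y' : E) : |⟪v - m, y'⟫| - |⟪u - m, y'⟫| ≤ ‖v - u‖ * ‖y' - y‖ :=
  calc |⟪v - m, y'⟫| - |⟪u - m, y'⟫| ≤ |⟪v - m, y'⟫ - ⟪u - m, y'⟫| :=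
        abs_sub_abs_le_abs_sub _ _
    _ = |⟪v - u, y' - y⟫| := by
        rw [← inner_sub_left, sub_sub_sub_cancel_right, inner_sub_right, h, sub_zero]
    _ ≤ ‖v - u‖ * ‖y' - y‖ := abs_real_inner_le_norm _ _

theorem stmt_5_general (d : ℕ) (p q p' q' : EuclideanSpace ℝ (Fin d))
    (hpq' : p' ≠ q')
    (H H' : Set (EuclideanSpace ℝ (Fin d)))
    (hH : H = {x | ‖x - p‖ = ‖x - q‖}) (hH' : H' = {x | ‖x - p'‖ = ‖x - q'‖})
    (y y' : EuclideanSpace ℝ (Fin d))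
    (hy : y = ‖q - p‖⁻¹ • (q - p)) (hy' : y' = ‖q' - p'‖⁻¹ • (q' - p'))
    (u v : EuclideanSpace ℝ (Fin d)) (hu : u ∈ H) (hv : v ∈ H) :
    Metric.infDist v H' - Metric.infDist u H' ≤ ‖v - u‖ * ‖y' - y‖ := by
  rw [hH, setOf_norm_sub_eq_norm_sub, ← hy] at hu hv
  have hy'_norm : ‖y'‖ = 1 := hy' ▸ norm_smul_inv_norm (sub_ne_zero.2 hpq'.symm)
  rw [hH', setOf_norm_sub_eq_norm_sub, ← hy', infDist_setOf_inner_sub_eq_zero hy'_norm,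
    infDist_setOf_inner_sub_eq_zero hy'_norm]
  have hvu : ⟪v - u, y⟫ = 0 := by
    rw [← sub_sub_sub_cancel_right v u (midpoint ℝ p q), inner_sub_left, hv, hu, sub_zero]
  exact abs_inner_sub_abs_inner_le_of_inner_eq_zero hvu _ _

theorem stmt_5 (d : ℕ) (p q p' q' : EuclideanSpace ℝ (Fin d))
    (hpq : p ≠ q) (hpq' : p' ≠ q') (δ : ℝ) (hδ : 0 ≤ δ)
    (hp : ‖p - p'‖ ≤ δ) (hq : ‖q - q'‖ ≤ δ)
    (H H' : Set (EuclideanSpace ℝ (Fin d)))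
    (hH : H = {x | ‖x - p‖ = ‖x - q‖}) (hH' : H' = {x | ‖x - p'‖ = ‖x - q'‖})
    (y y' : EuclideanSpace ℝ (Fin d))
    (hy : y = ‖q - p‖⁻¹ • (q - p)) (hy' : y' = ‖q' - p'‖⁻¹ • (q' - p'))
    (u v : EuclideanSpace ℝ (Fin d)) (hu : u ∈ H) (hv : v ∈ H) :
    Metric.infDist v H' - Metric.infDist u H' ≤ ‖v - u‖ * ‖y' - y‖ :=
  stmt_5_general d p q p' q' hpq' H H' hH hH' y y' hy hy' u v hu hv
end

section
/- Let p, q, q'' ∈ ℝ^d with p ≠ q and p ≠ q'', and let θ be the angle between q − p and q'' − p. Then sin(θ/2) ≤ ‖q'' − q‖ / ‖p − q‖. -/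
/-!
By the law of cosines, with `a = ‖x‖`, `b = ‖y‖` and `t = cos θ`,
`‖x - y‖² - a² sin² (θ/2) = ((1 + t)(a - b)² + (1 - t) b²) / 2 + (1 - t) a b`,
which is nonnegative since `-1 ≤ t ≤ 1`.
-/

open Real InnerProductGeometry

theorem norm_mul_sin_half_angle_le_norm_sub {V : Type*} [NormedAddCommGroup V]
    [InnerProductSpace ℝ V] (x y : V) : ‖x‖ * sin (angle x y / 2) ≤ ‖x - y‖ := by
  set t := cos (angle x y)
  have hsin_sq : sin (angle x y / 2) ^ 2 = (1 - t) / 2 := by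
    rw [sin_sq_eq_half_sub, mul_div_cancel₀ _ two_ne_zero]; ring
  have hlaw := norm_sub_sq_eq_norm_sq_add_norm_sq_sub_two_mul_norm_mul_norm_mul_cos_angle x y
  have ht_le : t ≤ 1 := cos_le_one _
  have ht_ge : -1 ≤ t := neg_one_le_cos _
  have hsq : (‖x‖ * sin (angle x y / 2)) ^ 2 ≤ ‖x - y‖ ^ 2 := by
    nlinarith [mul_nonneg (by linarith : (0 : ℝ) ≤ 1 + t) (sq_nonneg (‖x‖ - ‖y‖)),
      mul_nonneg (by linarith : (0 : ℝ) ≤ 1 - t) (sq_nonneg ‖y‖),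
      mul_nonneg (mul_nonneg (by linarith : (0 : ℝ) ≤ 1 - t) (norm_nonneg x)) (norm_nonneg y)]
  exact le_of_sq_le_sq hsq (norm_nonneg _)

theorem stmt_7_general (d : ℕ) (p q q'' : EuclideanSpace ℝ (Fin d))
    (hpq : p ≠ q) (θ : ℝ) (hθ0 : 0 ≤ θ) (hθπ : θ ≤ Real.pi)
    (hcos : Real.cos θ = inner ℝ (q - p) (q'' - p) / (‖q - p‖ * ‖q'' - p‖)) :
    Real.sin (θ / 2) ≤ ‖q'' - q‖ / ‖p - q‖ := by
  have hθ : angle (q - p) (q'' - p) = θ := by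
    rw [angle, ← hcos, arccos_cos hθ0 hθπ]
  have hpos : 0 < ‖p - q‖ := norm_sub_pos_iff.mpr hpq
  rw [le_div_iff₀ hpos, mul_comm, norm_sub_rev p q, norm_sub_rev q'' q, ← hθ]
  simpa using norm_mul_sin_half_angle_le_norm_sub (q - p) (q'' - p)

theorem stmt_7 (d : ℕ) (p q q'' : EuclideanSpace ℝ (Fin d))
    (hpq : p ≠ q) (hpq'' : p ≠ q'') (θ : ℝ) (hθ0 : 0 ≤ θ) (hθπ : θ ≤ Real.pi)
    (hcos : Real.cos θ = inner ℝ (q - p) (q'' - p) / (‖q - p‖ * ‖q'' - p‖)) :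
    Real.sin (θ / 2) ≤ ‖q'' - q‖ / ‖p - q‖ :=
  stmt_7_general d p q q'' hpq θ hθ0 hθπ hcos
end
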